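/- arXiv:1811.07512 — 7 statements merged into one kernel-verified Lean document; each statement's English description precedes it below -/
import Mathlib

section
/- For the ellipse x²/a² + a²y² = 1 with a ≥ 1 and eccentricity e = √(1 − 1/a⁴), the quantity Q₁ := ∫_{∂Ω} |∇u₀|² ds equals (4/3)·a³/(1+a⁴)²·(2(1+a⁴)E(e) − K(e)), where u₀ = (1 − x²/a² − a²y²)/(2(a² + 1/a²)) and E, K are the complete elliptic integrals of the second and first kind. -/
open Real MeasureTheory Function

/-! On the ellipse the integrand equals `a⁷/(1+a⁴)² · (1 − e² cos² ψ)^{3/2}`. The symmetries of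
`cos²` reduce the integral over a full period to four times that of `Δ³` over `[0, π/2]`, where
`Δ(θ) = √(1 − e² sin² θ)`, and the reduction `3 ∫ Δ³ = 2(2 − e²) E − (1 − e²) K` comes from
differentiating `e² sin θ cos θ Δ(θ)`, which vanishes at both ends. -/

theorem Function.Periodic.intervalIntegral_zero_two_mul_eq_four_mul_of_symm {f : ℝ → ℝ} {T : ℝ}
    (hper : Periodic f T) (hsymm : ∀ x, f (T - x) = f x)
    (hint : ∀ a b, IntervalIntegrable f volume a b) :
    ∫ x in 0..2 * T, f x = 4 * ∫ x in 0..T / 2, f x := by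
  have hfull : ∫ x in 0..2 * T, f x = 2 * ∫ x in 0..T, f x := by
    simpa [two_mul] using hper.intervalIntegral_add_eq_add 0 T hint
  have hhalf : ∫ x in T / 2..T, f x = ∫ x in 0..T / 2, f x := by
    simpa [hsymm, show T - T / 2 = T / 2 by ring] using
      (intervalIntegral.integral_comp_sub_left f T (a := 0) (b := T / 2)).symm
  rw [hfull, ← intervalIntegral.integral_add_adjacent_intervals (hint 0 (T / 2)) (hint _ T), hhalf]
  ring

theorem integral_comp_cos_sq_eq_four_mul (g : ℝ → ℝ) (hg : Continuous g) :
    ∫ ψ in 0..2 * π, g (cos ψ ^ 2) = 4 * ∫ θ in 0..π / 2, g (sin θ ^ 2) := by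
  have hper : Periodic (fun ψ => g (cos ψ ^ 2)) π := fun ψ => by simp [cos_add_pi]
  rw [hper.intervalIntegral_zero_two_mul_eq_four_mul_of_symm (fun ψ => by simp [cos_pi_sub])
    fun a b => (hg.comp (continuous_cos.pow 2)).intervalIntegrable a b]
  congr 1
  simpa [cos_pi_div_two_sub] using
    (intervalIntegral.integral_comp_sub_left (fun ψ => g (cos ψ ^ 2)) (π / 2) (a := 0)
      (b := π / 2)).symm

theorem one_sub_mul_sin_sq_pos {m : ℝ} (hm : m < 1) (θ : ℝ) : 0 < 1 - m * sin θ ^ 2 := by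
  rcases le_or_gt m 0 with hm0 | hm0
  · nlinarith [sq_nonneg (sin θ)]
  · nlinarith [sin_sq_le_one θ]

theorem hasDerivAt_mul_sin_mul_cos_mul_sqrt {m : ℝ} (θ : ℝ) (hD : 0 < 1 - m * sin θ ^ 2) :
    HasDerivAt (fun θ => m * (sin θ * cos θ * √(1 - m * sin θ ^ 2)))
      (3 * ((1 - m * sin θ ^ 2) * √(1 - m * sin θ ^ 2)) - 2 * (2 - m) * √(1 - m * sin θ ^ 2)
        + (1 - m) / √(1 - m * sin θ ^ 2)) θ := by
  have hD' : HasDerivAt (fun θ => 1 - m * sin θ ^ 2) (-(m * (2 * sin θ * cos θ))) θ := by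
    simpa [mul_comm, mul_assoc, mul_left_comm] using
      (((hasDerivAt_sin θ).pow 2).const_mul m).const_sub 1
  have hprod : HasDerivAt (fun θ => sin θ * cos θ * √(1 - m * sin θ ^ 2))
      ((cos θ * cos θ + sin θ * -sin θ) * √(1 - m * sin θ ^ 2)
        + sin θ * cos θ * (-(m * (2 * sin θ * cos θ)) / (2 * √(1 - m * sin θ ^ 2)))) θ :=
    ((hasDerivAt_sin θ).mul (hasDerivAt_cos θ)).mul (hD'.sqrt hD.ne')
  refine (hprod.const_mul m).congr_deriv ?_
  have hsq : √(1 - m * sin θ ^ 2) ^ 2 = 1 - m * sin θ ^ 2 := sq_sqrt hD.le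
  have hne : √(1 - m * sin θ ^ 2) ≠ 0 := (sqrt_pos.2 hD).ne'
  field_simp
  linear_combination (m * (cos θ ^ 2 - sin θ ^ 2) - 3 * (1 - m * sin θ ^ 2) + 4 - 2 * m) * hsq
    + m * (1 - 2 * m * sin θ ^ 2) * sin_sq_add_cos_sq θ

theorem integral_one_sub_mul_sin_sq_mul_sqrt {m : ℝ} (hm : m < 1) :
    ∫ θ in 0..π / 2, (1 - m * sin θ ^ 2) * √(1 - m * sin θ ^ 2)
      = 2 * (2 - m) / 3 * (∫ θ in 0..π / 2, √(1 - m * sin θ ^ 2))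
        - (1 - m) / 3 * ∫ θ in 0..π / 2, 1 / √(1 - m * sin θ ^ 2) := by
  have hD : Continuous fun θ => 1 - m * sin θ ^ 2 := by fun_prop
  have hinv : Continuous fun θ => 1 / √(1 - m * sin θ ^ 2) :=
    continuous_const.div hD.sqrt fun θ => (sqrt_pos.2 (one_sub_mul_sin_sq_pos hm θ)).ne'
  have hFTC := intervalIntegral.integral_eq_sub_of_hasDerivAt (a := 0) (b := π / 2)
    (fun θ _ => hasDerivAt_mul_sin_mul_cos_mul_sqrt θ (one_sub_mul_sin_sq_pos hm θ))
    (Continuous.intervalIntegrable (by simp only [div_eq_mul_one_div (1 - m)]; fun_prop) _ _)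
  simp only [sin_zero, cos_pi_div_two, zero_mul, mul_zero, sub_zero, div_eq_mul_one_div (1 - m)]
    at hFTC
  rw [intervalIntegral.integral_add, intervalIntegral.integral_sub,
    intervalIntegral.integral_const_mul, intervalIntegral.integral_const_mul,
    intervalIntegral.integral_const_mul] at hFTC
  · linarith
  all_goals exact Continuous.intervalIntegrable (by fun_prop) _ _

theorem ellipse_boundary_integrand_eq {a : ℝ} (ha : 0 < a) (ψ : ℝ) :
    ((a * cos ψ) ^ 2 / a ^ 4 + a ^ 4 * (sin ψ / a) ^ 2) / (a ^ 2 + 1 / a ^ 2) ^ 2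
        * √(a ^ 2 * sin ψ ^ 2 + cos ψ ^ 2 / a ^ 2)
      = a ^ 7 / (1 + a ^ 4) ^ 2
        * ((1 - (1 - 1 / a ^ 4) * cos ψ ^ 2) * √(1 - (1 - 1 / a ^ 4) * cos ψ ^ 2)) := by
  have hX : a ^ 2 * sin ψ ^ 2 + cos ψ ^ 2 / a ^ 2 = a ^ 2 * (1 - (1 - 1 / a ^ 4) * cos ψ ^ 2) := by
    field_simp
    linear_combination a ^ 4 * sin_sq_add_cos_sq ψ
  have hgrad : (a * cos ψ) ^ 2 / a ^ 4 + a ^ 4 * (sin ψ / a) ^ 2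
      = a ^ 2 * sin ψ ^ 2 + cos ψ ^ 2 / a ^ 2 := by
    field_simp
    ring
  rw [hgrad, hX, sqrt_mul (sq_nonneg a), sqrt_sq ha.le]
  field_simp
  ring

/-- For the ellipse `x²/a² + a²y² = 1` (`a ≥ 1`, eccentricity `e = √(1−1/a⁴)`),
`Q₁ = ∫_{∂Ω} |∇u₀|² ds = (4/3)·a³/(1+a⁴)²·(2(1+a⁴)E(e) − K(e))`, the boundary
integral computed by the parametrization `(a cos ψ, (1/a) sin ψ)`. -/
theorem stmt4 (a : ℝ) (ha : 1 ≤ a) (e E K : ℝ)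
    (he : e = Real.sqrt (1 - 1/a^4))
    (hE : E = ∫ θ in (0:ℝ)..(π/2), Real.sqrt (1 - e^2 * Real.sin θ^2))
    (hK : K = ∫ θ in (0:ℝ)..(π/2), 1/Real.sqrt (1 - e^2 * Real.sin θ^2)) :
    (∫ ψ in (0:ℝ)..(2*π),
        (((a*Real.cos ψ)^2/a^4 + a^4*((Real.sin ψ)/a)^2)/(a^2 + 1/a^2)^2) *
          Real.sqrt (a^2*Real.sin ψ^2 + Real.cos ψ^2/a^2))
      = 4/3 * (a^3/(1+a^4)^2) * (2*(1+a^4)*E - K) := by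
  have ha0 : 0 < a := by linarith
  have hm : 1 - 1 / a ^ 4 < 1 := sub_lt_self 1 (by positivity)
  have he2 : e ^ 2 = 1 - 1 / a ^ 4 := by
    rw [he, sq_sqrt (sub_nonneg.2 (div_le_one_of_le₀ (one_le_pow₀ ha) (by positivity)))]
  rw [intervalIntegral.integral_congr fun ψ _ => ellipse_boundary_integrand_eq ha0 ψ,
    intervalIntegral.integral_const_mul, integral_comp_cos_sq_eq_four_mul
      (fun t => (1 - (1 - 1 / a ^ 4) * t) * √(1 - (1 - 1 / a ^ 4) * t)) (by fun_prop),
    integral_one_sub_mul_sin_sq_mul_sqrt hm, hE, hK, he2]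
  field_simp
  ring
end

section
/- Fix q > 1. With g_n and ĝ_n the Fourier cosine coefficients of g(ψ) = (1 − cos²ψ/q)^{-1/2} and of its reciprocal ĝ, one has 8 m q ĝ_m = g_{m+1} − g_{m−1} for every integer m ≥ 1. -/
/-!
Since `d/dψ √(1 - cos²ψ/q) = (sin 2ψ / 2q) · g(ψ)`, integrating `ĝ(ψ) cos 2mψ` by parts against
`sin 2mψ / 2m`, which vanishes at `0` and `π`, leaves the integral of `g(ψ) sin 2ψ sin 2mψ`; the
product formula `2 sin 2mψ sin 2ψ = cos 2(m-1)ψ - cos 2(m+1)ψ` turns it into `g_{m-1} - g_{m+1}`.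
-/

open Real MeasureTheory

theorem integral_mul_cos_nat_mul_eq {f f' : ℝ → ℝ} {k : ℕ} (hk : k ≠ 0)
    (hf : ∀ x ∈ Set.uIcc 0 π, HasDerivAt f (f' x) x) (hf' : IntervalIntegrable f' volume 0 π) :
    ∫ x in 0..π, f x * cos (k * x) = -(∫ x in 0..π, f' x * sin (k * x)) / k := by
  have hk₀ : (k : ℝ) ≠ 0 := Nat.cast_ne_zero.mpr hk
  have hsin : ∀ x, HasDerivAt (fun x => sin (k * x) / k) (cos (k * x)) x := fun x => by
    simpa [hk₀] using (((hasDerivAt_id x).const_mul (k : ℝ)).sin).div_const (k : ℝ)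
  rw [intervalIntegral.integral_mul_deriv_eq_deriv_mul hf (fun x _ => hsin x) hf'
    ((by fun_prop : Continuous fun x : ℝ => cos (k * x)).intervalIntegrable 0 π)]
  simp only [sin_nat_mul_pi, mul_zero, sin_zero, zero_div, sub_self, zero_sub, mul_div_assoc',
    intervalIntegral.integral_div, neg_div]

theorem four_mul_integral_mul_cos_two_mul_eq {f h : ℝ → ℝ} {m : ℕ} (hm : m ≠ 0)
    (hf : ∀ x ∈ Set.uIcc 0 π, HasDerivAt f (sin (2 * x) * h x) x)
    (hh : IntervalIntegrable h volume 0 π) :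
    4 * m * ∫ x in 0..π, f x * cos (2 * m * x) =
      (∫ x in 0..π, h x * cos (2 * (m + 1) * x)) - ∫ x in 0..π, h x * cos (2 * (m - 1) * x) := by
  have hsin_mul_sin : ∀ x, sin (2 * x) * h x * sin (2 * m * x) =
      (h x * cos (2 * (m - 1) * x) - h x * cos (2 * (m + 1) * x)) / 2 := fun x => by
    have := two_mul_sin_mul_sin (2 * m * x) (2 * x)
    rw [show 2 * m * x - 2 * x = 2 * (m - 1) * x by ring,
      show 2 * m * x + 2 * x = 2 * (m + 1) * x by ring] at this
    linear_combination (h x / 2) * this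
  have hcos : ∀ c : ℝ, IntervalIntegrable (fun x => h x * cos (c * x)) volume 0 π := fun c =>
    hh.mul_continuousOn (by fun_prop)
  have hparts := integral_mul_cos_nat_mul_eq (k := 2 * m) (by positivity) hf
    (hh.continuousOn_mul (by fun_prop))
  push_cast at hparts
  simp only [hsin_mul_sin, intervalIntegral.integral_div,
    intervalIntegral.integral_sub (hcos _) (hcos _)] at hparts
  rw [hparts]
  field_simp
  ring

theorem one_sub_cos_sq_div_pos {q : ℝ} (hq : 1 < q) (x : ℝ) : 0 < 1 - cos x ^ 2 / q := by
  have : cos x ^ 2 / q < 1 := (div_lt_one (by linarith)).mpr ((cos_sq_le_one x).trans_lt hq)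
  linarith

theorem hasDerivAt_sqrt_one_sub_cos_sq_div {q : ℝ} (hq : 1 < q) (x : ℝ) :
    HasDerivAt (fun x => √(1 - cos x ^ 2 / q))
      (sin (2 * x) * ((2 * q)⁻¹ * (1 / √(1 - cos x ^ 2 / q)))) x := by
  have hpos := one_sub_cos_sq_div_pos hq x
  have hq₀ : q ≠ 0 := by linarith
  convert ((((hasDerivAt_cos x).fun_pow 2).div_const q).const_sub 1).sqrt hpos.ne' using 1
  rw [sin_two_mul]
  field_simp
  ring

theorem continuous_one_div_sqrt_one_sub_cos_sq_div {q : ℝ} (hq : 1 < q) :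
    Continuous fun x => 1 / √(1 - cos x ^ 2 / q) :=
  continuous_const.div (by fun_prop) fun x => (sqrt_pos.mpr (one_sub_cos_sq_div_pos hq x)).ne'

/-- For `q > 1`, with `g_n` and `ghat_n` the Fourier cosine coefficients of
`g(ψ) = (1 − cos²ψ/q)^{-1/2}` and of `ghat = 1/g`, one has
`8 m q ghat_m = g_{m+1} − g_{m−1}` for every `m ≥ 1`. -/
theorem stmt9 (q : ℝ) (hq : 1 < q) (g ghat : ℕ → ℝ)
    (hg : ∀ n : ℕ, g n
      = (2/π) * ∫ ψ in (0:ℝ)..π, (1/Real.sqrt (1 - Real.cos ψ^2/q)) * Real.cos (2*n*ψ))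
    (hghat : ∀ n : ℕ, ghat n
      = (2/π) * ∫ ψ in (0:ℝ)..π, Real.sqrt (1 - Real.cos ψ^2/q) * Real.cos (2*n*ψ)) :
    ∀ m : ℕ, 1 ≤ m → 8*(m:ℝ)*q*ghat m = g (m+1) - g (m-1) := by
  intro m hm
  have key := four_mul_integral_mul_cos_two_mul_eq (Nat.one_le_iff_ne_zero.mp hm)
    (fun x _ => hasDerivAt_sqrt_one_sub_cos_sq_div hq x)
    (((continuous_one_div_sqrt_one_sub_cos_sq_div hq).const_mul (2 * q)⁻¹).intervalIntegrable 0 π)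
  simp only [mul_assoc (2 * q)⁻¹, intervalIntegral.integral_const_mul, ← mul_sub] at key
  rw [eq_inv_mul_iff_mul_eq₀ (by positivity)] at key
  rw [hghat, hg, hg, Nat.cast_sub hm]
  push_cast
  linear_combination (2 / π) * key
end

section
/- Fix x = q₂ ∈ ℝ. If the sequence (u_n) satisfies the recurrence (n + 1/2)u_{n+1} = 2xn·u_n − (n − 1/2)u_{n−1} for all n ≥ 1, then the sequence û_n := (u_{n+1} − u_{n−1})/n (defined for n ≥ 1) satisfies (n + 3/2)û_{n+1} = 2xn·û_n − (n − 3/2)û_{n−1} for all n ≥ 2. -/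
/-!
Dividing the recurrence `(m+α)u_{m+1} = 2xm·u_m − (m−α)u_{m−1}` by `m` shows that the difference
quotient `û_m = (u_{m+1} − u_{m−1})/m` satisfies both `(m+α)û_m = 2x·u_m − 2u_{m−1}` and
`(m−α)û_m = 2u_{m+1} − 2x·u_m`. Applying the first identity at `n+1`, the second at `n−1`, and
`n·û_n = u_{n+1} − u_{n−1}`, the terms in `u` cancel and leave the recurrence with `α + 1`.
-/

section DifferenceQuotient

variable {α x : ℝ} {u : ℕ → ℝ} {m : ℕ}

lemma add_mul_diffQuot_eq (hm : m ≠ 0)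
    (h : ((m:ℝ)+α)*u (m+1) = 2*x*(m:ℝ)*u m - ((m:ℝ)-α)*u (m-1)) :
    ((m:ℝ)+α) * ((u (m+1) - u (m-1)) / m) = 2*x*u m - 2*u (m-1) := by
  have hm' : (m:ℝ) ≠ 0 := Nat.cast_ne_zero.mpr hm
  field_simp
  linear_combination h

lemma sub_mul_diffQuot_eq (hm : m ≠ 0)
    (h : ((m:ℝ)+α)*u (m+1) = 2*x*(m:ℝ)*u m - ((m:ℝ)-α)*u (m-1)) :
    ((m:ℝ)-α) * ((u (m+1) - u (m-1)) / m) = 2*u (m+1) - 2*x*u m := by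
  have hm' : (m:ℝ) ≠ 0 := Nat.cast_ne_zero.mpr hm
  field_simp
  linear_combination -h

end DifferenceQuotient

/-- If `(u_n)` satisfies `(n+1/2)u_{n+1} = 2xn·u_n − (n−1/2)u_{n−1}` for `n ≥ 1`,
then `uhat_n = (u_{n+1} − u_{n−1})/n` satisfies
`(n+3/2)uhat_{n+1} = 2xn·uhat_n − (n−3/2)uhat_{n−1}` for `n ≥ 2`. -/
theorem stmt10 (x : ℝ) (u : ℕ → ℝ)
    (hu : ∀ n : ℕ, 1 ≤ n →
      ((n:ℝ)+1/2)*u (n+1) = 2*x*(n:ℝ)*u n - ((n:ℝ)-1/2)*u (n-1))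
    (uhat : ℕ → ℝ)
    (huhat : ∀ n : ℕ, 1 ≤ n → uhat n = (u (n+1) - u (n-1))/(n:ℝ)) :
    ∀ n : ℕ, 2 ≤ n →
      ((n:ℝ)+3/2)*uhat (n+1) = 2*x*(n:ℝ)*uhat n - ((n:ℝ)-3/2)*uhat (n-1) := by
  intro n hn
  obtain ⟨k, rfl⟩ : ∃ k, n = k + 1 := ⟨n - 1, by omega⟩
  have hnext := add_mul_diffQuot_eq (m := k + 2) (by omega) (hu (k + 2) (by omega))
  have hprev := sub_mul_diffQuot_eq (m := k) (by omega) (hu k (by omega))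
  have hmid : ((k + 1 : ℕ) : ℝ) * uhat (k + 1) = u (k + 2) - u k := by
    rw [huhat (k + 1) (by omega), mul_div_cancel₀ _ (by positivity)]
    rfl
  rw [← huhat (k + 2) (by omega)] at hnext
  rw [← huhat k (by omega)] at hprev
  simp only [Nat.add_sub_cancel] at hnext hmid ⊢
  push_cast at hnext hmid ⊢
  linear_combination hnext - 2 * x * hmid + hprev
end

section
/- Fix x ∈ ℝ. If (u_n) satisfies (n + 1/2)u_{n+1} = 2xn·u_n − (n − 1/2)u_{n−1} for all n ≥ 1, then û_n := 2x·u_n − u_{n+1} − u_{n−1} satisfies (n + 3/2)û_{n+1} = 2xn·û_n − (n − 3/2)û_{n−1} for all n ≥ 2. -/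
/-- If `(u_n)` satisfies `(n+1/2)u_{n+1} = 2xn·u_n − (n−1/2)u_{n−1}` for `n ≥ 1`,
then `uhat_n = 2x·u_n − u_{n+1} − u_{n−1}` satisfies
`(n+3/2)uhat_{n+1} = 2xn·uhat_n − (n−3/2)uhat_{n−1}` for `n ≥ 2`. -/
theorem stmt11 (x : ℝ) (u : ℕ → ℝ)
    (hu : ∀ n : ℕ, 1 ≤ n →
      ((n:ℝ)+1/2)*u (n+1) = 2*x*(n:ℝ)*u n - ((n:ℝ)-1/2)*u (n-1))
    (uhat : ℕ → ℝ)
    (huhat : ∀ n : ℕ, uhat n = 2*x*u n - u (n+1) - u (n-1)) :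
    ∀ n : ℕ, 2 ≤ n →
      ((n:ℝ)+3/2)*uhat (n+1) = 2*x*(n:ℝ)*uhat n - ((n:ℝ)-3/2)*uhat (n-1) := by
  intro n hn
  obtain ⟨k, rfl⟩ : ∃ k, n = k + 2 := ⟨n - 2, by omega⟩
  have h1 := hu (k+1) (by omega)
  have h2 := hu (k+2) (by omega)
  have h3 := hu (k+3) (by omega)
  simp only [Nat.add_sub_cancel, show k+1-1 = k from rfl, show k+2-1 = k+1 from rfl,
    show k+3-1 = k+2 from rfl] at *
  rw [huhat (k+3), huhat (k+2), huhat (k+1)]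
  simp only [show k+1-1 = k from rfl, show k+2-1 = k+1 from rfl, show k+3-1 = k+2 from rfl]
  push_cast at *
  linear_combination 2*x*h2 - h3 - h1
end

section
/- Fix x ∈ ℝ. If (û_n) satisfies (n + 3/2)û_{n+1} = 2xn·û_n − (n − 3/2)û_{n−1} for all n ≥ 1, then the sequence v_n := (n² − 1/4)û_n satisfies (n − 1/2)v_{n+1} = 2xn·v_n − (n + 1/2)v_{n−1} for all n ≥ 1. -/
/-- If `(uhat_n)` satisfies `(n+3/2)uhat_{n+1} = 2xn·uhat_n − (n−3/2)uhat_{n−1}` for `n ≥ 1`,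
then `v_n = (n² − 1/4)uhat_n` satisfies
`(n−1/2)v_{n+1} = 2xn·v_n − (n+1/2)v_{n−1}` for `n ≥ 1`. -/
theorem stmt12 (x : ℝ) (uhat : ℕ → ℝ)
    (huhat : ∀ n : ℕ, 1 ≤ n →
      ((n:ℝ)+3/2)*uhat (n+1) = 2*x*(n:ℝ)*uhat n - ((n:ℝ)-3/2)*uhat (n-1))
    (v : ℕ → ℝ) (hv : ∀ n : ℕ, v n = ((n:ℝ)^2 - 1/4)*uhat n) :
    ∀ n : ℕ, 1 ≤ n →
      ((n:ℝ)-1/2)*v (n+1) = 2*x*(n:ℝ)*v n - ((n:ℝ)+1/2)*v (n-1) := by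
  intro n hn
  have h := huhat n hn
  have hc : ((n-1 : ℕ) : ℝ) = (n : ℝ) - 1 := by
    rw [Nat.cast_sub hn]; simp
  rw [hv (n+1), hv n, hv (n-1), hc]
  push_cast
  nlinarith [h, sq_nonneg ((n:ℝ))]
end

section
/- Let α be real with α not a nonpositive integer offset making the Gamma factors singular, fix x ∈ ℝ, and let (u_n) and (U_n) be two sequences satisfying (n+α)w_{n+1} = 2xn·w_n − (n−α)w_{n−1} for n ≥ 1. Then for all n ≥ 0, u_n U_{n+1} − u_{n+1} U_n = c · Γ(n+1−α)/Γ(n+1+α), where c = (u₀U₁ − u₁U₀)·Γ(1+α)/Γ(1−α). -/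
open Real

lemma gne (α : ℝ) (hα : ∀ m : ℤ, α ≠ (m:ℝ)) (a : ℝ) (ha : ∃ k : ℤ, a - α = k ∨ a + α = k) :
    Real.Gamma a ≠ 0 := by
  apply Real.Gamma_ne_zero
  intro n h
  obtain ⟨k, hk | hk⟩ := ha
  · exact hα (-n - k) (by push_cast; linarith)
  · exact hα (k + n) (by push_cast; linarith)

/-- If `(u_n)` and `(U_n)` both satisfy `(n+α)w_{n+1} = 2xn·w_n − (n−α)w_{n−1}`
(with `α` avoiding the singularities of the Gamma factors), then
`u_n U_{n+1} − u_{n+1} U_n = c·Γ(n+1−α)/Γ(n+1+α)` with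
`c = (u₀U₁ − u₁U₀)·Γ(1+α)/Γ(1−α)`. -/
theorem stmt13 (α x : ℝ) (hα : ∀ m : ℤ, α ≠ (m:ℝ))
    (u U : ℕ → ℝ)
    (hu : ∀ n : ℕ, 1 ≤ n →
      ((n:ℝ)+α)*u (n+1) = 2*x*(n:ℝ)*u n - ((n:ℝ)-α)*u (n-1))
    (hU : ∀ n : ℕ, 1 ≤ n →
      ((n:ℝ)+α)*U (n+1) = 2*x*(n:ℝ)*U n - ((n:ℝ)-α)*U (n-1))
    (c : ℝ) (hc : c = (u 0 * U 1 - u 1 * U 0) * Real.Gamma (1+α) / Real.Gamma (1-α)) :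
    ∀ n : ℕ, u n * U (n+1) - u (n+1) * U n
      = c * Real.Gamma ((n:ℝ)+1-α) / Real.Gamma ((n:ℝ)+1+α) := by
  intro n
  induction n with
  | zero =>
    have h1 : Real.Gamma (1-α) ≠ 0 := gne α hα _ ⟨1, Or.inr (by ring)⟩
    have h2 : Real.Gamma (1+α) ≠ 0 := gne α hα _ ⟨1, Or.inl (by ring)⟩
    rw [hc]
    push_cast
    rw [show (0:ℝ)+1-α = 1-α by ring, show (0:ℝ)+1+α = 1+α by ring]
    field_simp
  | succ n ih =>
    have h1 : ((n:ℝ) + 1 + α) ≠ 0 := by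
      intro h; exact hα (-(n:ℤ) - 1) (by push_cast; linarith)
    have hu' := hu (n+1) (by omega)
    have hU' := hU (n+1) (by omega)
    simp only [Nat.add_sub_cancel] at hu' hU'
    push_cast at hu' hU'
    have key : ((n:ℝ)+1+α) * (u (n+1) * U (n+2) - u (n+2) * U (n+1))
        = ((n:ℝ)+1-α) * (u n * U (n+1) - u (n+1) * U n) := by
      have e1 : u (n+1) * (((n:ℝ)+1+α) * U (n+2)) - (((n:ℝ)+1+α) * u (n+2)) * U (n+1)
          = ((n:ℝ)+1-α) * (u n * U (n+1) - u (n+1) * U n) := by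
        rw [hu', hU']; ring
      linarith [e1]
    have hG1 : Real.Gamma ((n:ℝ)+1+1-α) = ((n:ℝ)+1-α) * Real.Gamma ((n:ℝ)+1-α) := by
      rw [show ((n:ℝ)+1+1-α) = ((n:ℝ)+1-α) + 1 by ring, Real.Gamma_add_one]
      intro h; exact hα ((n:ℤ)+1) (by push_cast; linarith)
    have hG2 : Real.Gamma ((n:ℝ)+1+1+α) = ((n:ℝ)+1+α) * Real.Gamma ((n:ℝ)+1+α) := by
      rw [show ((n:ℝ)+1+1+α) = ((n:ℝ)+1+α) + 1 by ring, Real.Gamma_add_one h1]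
    have hGm : Real.Gamma ((n:ℝ)+1+α) ≠ 0 :=
      gne α hα _ ⟨(n:ℤ)+1, Or.inl (by push_cast; ring)⟩
    push_cast
    rw [ih] at key; rw [hG1, hG2]
    field_simp at key ⊢
    linarith [key]
end

section
/- For all n ≥ 0 and x ∈ [−1,1], the Chebyshev polynomial of the second kind satisfies U_n(x) = Σ_{k=0}^{n} P_k(x)·P_{n−k}(x), where P_j denotes the Legendre polynomial of degree j. -/
/-!
Put `G = Σ Pₙ tⁿ` and `q = 1 - 2xt + t²`. Rodrigues' formula and the Leibniz rule give the
three-term (Bonnet) recursion for `Pₙ`, which is the coefficientwise form of the differential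
equation `q G' = (x - t) G`. Hence `(q G²)' = q' G² + 2 (x - t) G² = 0`, so `q G² = 1`. The
Chebyshev recursion says `q Σ Uₙ tⁿ = 1`, so `G² = Σ Uₙ tⁿ`, and comparing coefficients of `tⁿ`
gives the identity in `ℝ[x]`.
-/

open Polynomial

/-- The Legendre polynomial of degree `n` (Rodrigues' formula). -/
noncomputable def legendre (n : ℕ) : Polynomial ℝ :=
  C (1/((2:ℝ)^n * n.factorial)) * (derivative^[n] ((X^2 - 1)^n))

section CommRing

variable {R : Type*} [CommRing R]

theorem iterate_derivative_mul_X_sq_sub_one (p : R[X]) (n : ℕ) :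
    derivative^[n] (p * (X ^ 2 - 1)) = derivative^[n] p * (X ^ 2 - 1) +
      (2 * n) • (derivative^[n - 1] p * X) + (n * (n - 1)) • derivative^[n - 2] p := by
  have hp : p * (X ^ 2 - 1) = p * X * X - p := by ring
  simp only [hp, iterate_map_sub, iterate_derivative_mul_X, Nat.sub_sub, smul_add,
    nsmul_eq_mul, Nat.cast_mul, Nat.cast_ofNat]
  ring

theorem derivative_X_sq_sub_one_pow_succ (n : ℕ) :
    derivative ((X ^ 2 - 1 : R[X]) ^ (n + 1)) = (2 * (n + 1) : ℕ) • ((X ^ 2 - 1) ^ n * X) := by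
  rw [derivative_pow, derivative_sub, derivative_X_sq, derivative_one, nsmul_eq_mul]
  simp only [add_tsub_cancel_right, Nat.cast_mul, Nat.cast_ofNat, Nat.cast_add, Nat.cast_one,
    map_ofNat, map_add, map_one, map_natCast]
  ring

/-- Computing `Dⁿ⁺¹ (X² - 1)ⁿ⁺¹` once as `Dⁿ (D (X² - 1)ⁿ⁺¹)` and once by the Leibniz rule for
`(X² - 1) · (X² - 1)ⁿ` and eliminating the common term `Dⁿ⁻¹ (X² - 1)ⁿ`. -/
theorem iterate_derivative_X_sq_sub_one_pow_succ (n : ℕ) :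
    derivative^[n + 1] ((X ^ 2 - 1 : R[X]) ^ (n + 1)) =
      2 * (X ^ 2 - 1) * derivative (derivative^[n] ((X ^ 2 - 1) ^ n)) +
        2 * ((n : R[X]) + 1) * X * derivative^[n] ((X ^ 2 - 1) ^ n) := by
  have hleibniz := iterate_derivative_mul_X_sq_sub_one ((X ^ 2 - 1 : R[X]) ^ n) (n + 1)
  have hchain := congrArg (derivative^[n]) (derivative_X_sq_sub_one_pow_succ (R := R) n)
  rw [← pow_succ, show n + 1 - 2 = n - 1 by omega,
    Function.iterate_succ_apply' derivative n ((X ^ 2 - 1 : R[X]) ^ n)] at hleibniz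
  rw [← Function.iterate_succ_apply, iterate_derivative_smul, iterate_derivative_mul_X] at hchain
  simp only [Nat.succ_eq_add_one, add_tsub_cancel_right, nsmul_eq_mul, Nat.cast_mul,
    Nat.cast_ofNat, Nat.cast_add, Nat.cast_one] at hleibniz hchain
  linear_combination 2 * hleibniz - hchain

theorem derivative_iterate_derivative_X_sq_sub_one_pow_succ (n : ℕ) :
    derivative (derivative^[n + 1] ((X ^ 2 - 1 : R[X]) ^ (n + 1))) =
      2 * ((n : R[X]) + 1) * (X * derivative (derivative^[n] ((X ^ 2 - 1) ^ n)) +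
        ((n : R[X]) + 1) * derivative^[n] ((X ^ 2 - 1) ^ n)) := by
  rw [← Function.iterate_succ_apply' derivative, Function.iterate_succ_apply,
    derivative_X_sq_sub_one_pow_succ, iterate_derivative_smul, iterate_derivative_mul_X,
    Function.iterate_succ_apply']
  simp only [add_tsub_cancel_right, nsmul_eq_mul, Nat.cast_mul, Nat.cast_ofNat, Nat.cast_add,
    Nat.cast_one]
  ring

variable (R) in
/-- `1 - 2xt + t²` in `R[x]⟦t⟧`: the power-series variable is `t`, while the polynomial variable
`x` enters only through constants. -/
noncomputable def chebyshevUDenom : PowerSeries R[X] :=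
  1 - PowerSeries.C (2 * X) * PowerSeries.X + PowerSeries.X ^ 2

theorem chebyshevUDenom_mul (f : PowerSeries R[X]) :
    chebyshevUDenom R * f =
      f - PowerSeries.C (2 * X) * (PowerSeries.X * f) + PowerSeries.X * (PowerSeries.X * f) := by
  rw [chebyshevUDenom]
  ring

theorem coeff_zero_chebyshevUDenom_mul (f : PowerSeries R[X]) :
    PowerSeries.coeff 0 (chebyshevUDenom R * f) = PowerSeries.coeff 0 f := by
  simp [chebyshevUDenom_mul]

theorem coeff_one_chebyshevUDenom_mul (f : PowerSeries R[X]) :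
    PowerSeries.coeff 1 (chebyshevUDenom R * f) =
      PowerSeries.coeff 1 f - 2 * X * PowerSeries.coeff 0 f := by
  rw [chebyshevUDenom_mul, map_add, map_sub, PowerSeries.coeff_C_mul, PowerSeries.coeff_succ_X_mul,
    PowerSeries.coeff_succ_X_mul, PowerSeries.coeff_zero_X_mul, add_zero]

theorem coeff_add_two_chebyshevUDenom_mul (f : PowerSeries R[X]) (n : ℕ) :
    PowerSeries.coeff (n + 2) (chebyshevUDenom R * f) =
      PowerSeries.coeff (n + 2) f - 2 * X * PowerSeries.coeff (n + 1) f + PowerSeries.coeff n f := by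
  rw [chebyshevUDenom_mul, map_add, map_sub, PowerSeries.coeff_C_mul, PowerSeries.coeff_succ_X_mul,
    PowerSeries.coeff_succ_X_mul, PowerSeries.coeff_succ_X_mul]

theorem derivative_chebyshevUDenom :
    PowerSeries.derivative R[X] (chebyshevUDenom R) = 2 * PowerSeries.X - 2 * PowerSeries.C X := by
  simp [chebyshevUDenom, -map_mul]
  rw [map_mul, map_ofNat]
  ring

theorem chebyshevUDenom_mul_mk_U :
    chebyshevUDenom R * PowerSeries.mk (fun n => Chebyshev.U R n) = 1 := by
  ext (_ | _ | n)
  · simp [coeff_zero_chebyshevUDenom_mul]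
  · simp [coeff_one_chebyshevUDenom_mul]
  · rw [coeff_add_two_chebyshevUDenom_mul]
    simp only [PowerSeries.coeff_mk, PowerSeries.coeff_one]
    push_cast
    rw [Chebyshev.U_add_two]
    simp

end CommRing

theorem legendre_zero : legendre 0 = 1 := by simp [legendre]

theorem legendre_one : legendre 1 = X := by
  simp [legendre, ← mul_assoc, one_add_one_eq_two, ← C_mul]

theorem C_one_div_two_pow_mul_factorial_eq (n : ℕ) :
    C (1 / ((2 : ℝ) ^ n * n.factorial)) =
      2 * ((n : ℝ[X]) + 1) * C (1 / ((2 : ℝ) ^ (n + 1) * (n + 1).factorial)) := by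
  rw [← C_eq_natCast, ← C_1, ← C_ofNat, ← C_add, ← C_mul, ← C_mul, Nat.factorial_succ]
  congr 1
  field_simp
  push_cast
  ring

theorem succ_mul_legendre_succ (n : ℕ) :
    ((n : ℝ[X]) + 1) * legendre (n + 1) =
      (X ^ 2 - 1) * derivative (legendre n) + ((n : ℝ[X]) + 1) * X * legendre n := by
  rw [legendre, legendre, derivative_C_mul, C_one_div_two_pow_mul_factorial_eq n,
    iterate_derivative_X_sq_sub_one_pow_succ]
  ring

theorem derivative_legendre_succ (n : ℕ) :
    derivative (legendre (n + 1)) =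
      X * derivative (legendre n) + ((n : ℝ[X]) + 1) * legendre n := by
  rw [legendre, legendre, derivative_C_mul, derivative_C_mul,
    C_one_div_two_pow_mul_factorial_eq n, derivative_iterate_derivative_X_sq_sub_one_pow_succ]
  ring

theorem legendre_add_two (n : ℕ) :
    ((n : ℝ[X]) + 2) * legendre (n + 2) =
      (2 * (n : ℝ[X]) + 3) * X * legendre (n + 1) - ((n : ℝ[X]) + 1) * legendre n := by
  have h := succ_mul_legendre_succ (n + 1)
  push_cast at h
  linear_combination h + (X ^ 2 - 1) * derivative_legendre_succ n - X * succ_mul_legendre_succ n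

theorem chebyshevUDenom_mul_derivative_mk_legendre :
    chebyshevUDenom ℝ * PowerSeries.derivative ℝ[X] (PowerSeries.mk legendre) =
      (PowerSeries.C X - PowerSeries.X) * PowerSeries.mk legendre := by
  refine PowerSeries.ext fun n => ?_
  rcases n with _ | _ | n
  · simp [coeff_zero_chebyshevUDenom_mul, PowerSeries.coeff_derivative, legendre_zero,
      legendre_one]
  · have h := legendre_add_two 0
    simp only [zero_add, coeff_one_chebyshevUDenom_mul, PowerSeries.coeff_derivative, sub_mul,
      map_sub, PowerSeries.coeff_C_mul, PowerSeries.coeff_succ_X_mul, PowerSeries.coeff_mk] at h ⊢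
    push_cast at h ⊢
    linear_combination h
  · have h := legendre_add_two (n + 1)
    simp only [coeff_add_two_chebyshevUDenom_mul, PowerSeries.coeff_derivative, sub_mul, map_sub,
      PowerSeries.coeff_C_mul, PowerSeries.coeff_succ_X_mul, PowerSeries.coeff_mk] at h ⊢
    push_cast at h ⊢
    linear_combination h

theorem chebyshevUDenom_mul_mk_legendre_sq :
    chebyshevUDenom ℝ * PowerSeries.mk legendre ^ 2 = 1 := by
  apply PowerSeries.derivative.ext
  · calc PowerSeries.derivative ℝ[X] (chebyshevUDenom ℝ * PowerSeries.mk legendre ^ 2)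
        = PowerSeries.mk legendre ^ 2 * PowerSeries.derivative ℝ[X] (chebyshevUDenom ℝ) +
            2 * PowerSeries.mk legendre *
              (chebyshevUDenom ℝ * PowerSeries.derivative ℝ[X] (PowerSeries.mk legendre)) := by
          simp only [Derivation.leibniz, Derivation.leibniz_pow, smul_eq_mul]
          ring
      _ = PowerSeries.derivative ℝ[X] 1 := by
          rw [chebyshevUDenom_mul_derivative_mk_legendre, derivative_chebyshevUDenom,
            PowerSeries.derivative_one]
          ring
  · simp [chebyshevUDenom, legendre_zero]

theorem mk_legendre_sq :
    PowerSeries.mk legendre ^ 2 = PowerSeries.mk (fun n => Chebyshev.U ℝ n) := by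
  calc PowerSeries.mk legendre ^ 2
      = PowerSeries.mk legendre ^ 2 *
          (chebyshevUDenom ℝ * PowerSeries.mk (fun n => Chebyshev.U ℝ n)) := by
        rw [chebyshevUDenom_mul_mk_U, mul_one]
    _ = PowerSeries.mk (fun n => Chebyshev.U ℝ n) := by
        rw [← mul_assoc, mul_comm _ (chebyshevUDenom ℝ), chebyshevUDenom_mul_mk_legendre_sq,
          one_mul]

theorem chebyshev_U_eq_sum_legendre_mul (n : ℕ) :
    Chebyshev.U ℝ n = ∑ k ∈ Finset.range (n + 1), legendre k * legendre (n - k) := by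
  have h := congrArg (PowerSeries.coeff n) mk_legendre_sq
  simp only [PowerSeries.coeff_mk, pow_two, PowerSeries.coeff_mul] at h
  rwa [Finset.Nat.sum_antidiagonal_eq_sum_range_succ (fun i j => legendre i * legendre j),
    eq_comm] at h

theorem stmt17_general (n : ℕ) (x : ℝ) :
    (Polynomial.Chebyshev.U ℝ (n:ℤ)).eval x
      = ∑ k ∈ Finset.range (n+1), (legendre k).eval x * (legendre (n-k)).eval x := by
  rw [chebyshev_U_eq_sum_legendre_mul, eval_finsetSum]
  simp only [eval_mul]

/-- For `n ≥ 0` and `x ∈ [−1,1]`,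
`U_n(x) = Σ_{k=0}^{n} P_k(x) P_{n−k}(x)` where `P_j` is the Legendre polynomial. -/
theorem stmt17 (n : ℕ) (x : ℝ) (hx : x ∈ Set.Icc (-1:ℝ) 1) :
    (Polynomial.Chebyshev.U ℝ (n:ℤ)).eval x
      = ∑ k ∈ Finset.range (n+1), (legendre k).eval x * (legendre (n-k)).eval x :=
  stmt17_general n x
end
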